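/- Let δ ∈ (0,1) and let U ∈ 𝒰 be differentiable on (0,π/2] with t·U'(t) ≤ (1 − δ)·U(t) for all 0 < t ≤ π/2. Let ω_U be an increasing function with ω_U(x) → ∞ satisfying η_U(x/ω_U(x)) = ω_U(x) for all sufficiently large x, let τ > 1, and let V : ℝ → ℝ be any measurable function; define φ on the unit circle by φ(e^{it}) := exp(−U(t) − iV(t)). Then there is N such that for every integer n ≥ N, every ε with 0 < ε ≤ e^{−τ·ω_U(n)}, every r ∈ (0,1), and every Carleson square Q with side length ℓ(Q) = ε: (1/(2π))·Leb({t ∈ [−π,π] : |φ(e^{it})| > r and φ(e^{it}) ∈ Q}) ≤ e^{−δ·n/ω_U(n)}·ε. -/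

import Mathlib

open MeasureTheory Filter Set Complex

noncomputable section

noncomputable def hU (U : ℝ → ℝ) (t : ℝ) : ℝ := ∫ x in t..Real.pi, U x / x ^ 2

def ClassU (U : ℝ → ℝ) : Prop :=
  Continuous U ∧ (∀ t, U (-t) = U t) ∧ Function.Periodic U (2 * Real.pi) ∧
  U 0 = 0 ∧ MonotoneOn U (Set.Icc 0 Real.pi) ∧
  (∀ t, 0 < t → t ≤ Real.pi → 0 < U t) ∧
  Tendsto (fun t => hU U t) (nhdsWithin 0 (Set.Ioi 0)) atTop

noncomputable def etaU (U : ℝ → ℝ) (x : ℝ) : ℝ := -Real.log (U (Real.exp (-x)))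

/-- The Carleson square `Q(r₀,t₀)`. -/
def carlesonSquare (r₀ t₀ : ℝ) : Set ℂ :=
  {z : ℂ | ∃ ρ s : ℝ, r₀ ≤ ρ ∧ ρ ≤ 1 ∧ |s - t₀| ≤ (1 - r₀) * Real.pi ∧
    z = (ρ : ℂ) * Complex.exp ((s : ℂ) * Complex.I)}

/-!
The growth condition `t U' ≤ (1 - δ) U` makes `U t / t ^ (1 - δ)` nonincreasing on
`(0, π/2]`, so `U` cannot remain small away from `0`. A point whose image lies in a Carleson
square of side `ε` has modulus at least `1 - ε`, hence `U t ≤ 2ε`. Put `a = exp (-n / ω n)`;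
the defining relation of `ω` says exactly that `U a = exp (-ω n)`, which exceeds `2ε` by a
factor of at least `exp ((τ - 1) ω n) / 2`. Monotonicity of `U` and the growth condition then
confine `t` to `|t| ≤ a (2ε / U a) ^ (1 / (1 - δ))`, and comparing `U a` with `U (π/2)` through
the growth condition once more shows that this is at most `π ε a ^ δ = π ε exp (-δ n / ω n)`
for large `n`.
-/

open scoped Topology

theorem mul_rpow_div_le_of_mul_deriv_le {U U' : ℝ → ℝ} {T α : ℝ}
    (hpos : ∀ t ∈ Ioc 0 T, 0 < U t)
    (hderiv : ∀ t ∈ Ioc 0 T, HasDerivAt U (U' t) t)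
    (hbound : ∀ t ∈ Ioc 0 T, t * U' t ≤ α * U t)
    {s t : ℝ} (hs : 0 < s) (hst : s ≤ t) (ht : t ≤ T) :
    U t * (s / t) ^ α ≤ U s := by
  set g : ℝ → ℝ := fun x => Real.log (U x) - α * Real.log x
  have hg : ∀ x ∈ Ioc 0 T, HasDerivAt g (U' x / U x - α * x⁻¹) x := fun x hx =>
    ((hderiv x hx).log (hpos x hx).ne').sub ((Real.hasDerivAt_log hx.1.ne').const_mul α)
  have hanti : AntitoneOn g (Ioc 0 T) := by
    refine antitoneOn_of_hasDerivWithinAt_nonpos (convex_Ioc 0 T)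
      (fun x hx => (hg x hx).continuousAt.continuousWithinAt)
      (fun x hx => (hg x (interior_subset hx)).hasDerivWithinAt) fun x hx => ?_
    have hx := interior_subset hx
    rw [sub_nonpos, div_le_iff₀ (hpos x hx), ← div_eq_mul_inv, div_mul_eq_mul_div,
      le_div_iff₀ hx.1, mul_comm]
    exact hbound x hx
  have ht0 : 0 < t := hs.trans_le hst
  have hgst := hanti ⟨hs, hst.trans ht⟩ ⟨ht0, ht⟩ hst
  have hUt := hpos t ⟨ht0, ht⟩
  have hst0 : 0 < s / t := div_pos hs ht0
  rw [← Real.log_le_log_iff (mul_pos hUt (Real.rpow_pos_of_pos hst0 α))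
      (hpos s ⟨hs, hst.trans ht⟩),
    Real.log_mul hUt.ne' (Real.rpow_pos_of_pos hst0 α).ne', Real.log_rpow hst0,
    Real.log_div hs.ne' ht0.ne']
  linarith [hgst]

theorem rpow_le_div_mul_of_mul_rpow_div_le {s t α A B : ℝ} (hs : 0 ≤ s) (ht : 0 < t)
    (hA : 0 < A) (h : A * (s / t) ^ α ≤ B) : s ^ α ≤ t ^ α / A * B := by
  rw [Real.div_rpow hs ht.le] at h
  have htα := Real.rpow_pos_of_pos ht α
  rw [div_mul_eq_mul_div, le_div_iff₀ hA]
  calc s ^ α * A = t ^ α * (A * (s ^ α / t ^ α)) := by field_simp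
    _ ≤ t ^ α * B := by gcongr

theorem le_mul_rpow_of_le_of_lt {U : ℝ → ℝ} {L α a c x : ℝ} (hα : 0 < α)
    (hmono : MonotoneOn U (Icc 0 L)) (ha : a ∈ Ioc 0 L)
    (hgrowth : ∀ s, 0 < s → s ≤ a → U a * (s / a) ^ α ≤ U s)
    (hc : 0 < c) (hca : c < U a) (hx : x ∈ Icc 0 L) (hUx : U x ≤ c) :
    x ≤ a * (c / U a) ^ α⁻¹ := by
  have hUa : 0 < U a := hc.trans hca
  by_contra! hlt
  have hxa : x < a := by
    by_contra! hax
    exact (hca.trans_le (hmono ⟨ha.1.le, ha.2⟩ hx hax)).not_ge hUx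
  have ha0 := ha.1
  have hx0 : 0 < x := lt_of_le_of_lt (by positivity) hlt
  have hroot : c / U a < (x / a) ^ α := by
    rw [← Real.rpow_inv_lt_iff_of_pos (by positivity) (by positivity) hα, lt_div_iff₀ ha0,
      mul_comm]
    exact hlt
  have := hgrowth x hx0 hxa.le
  rw [div_lt_iff₀ hUa, mul_comm] at hroot
  linarith

theorem abs_le_of_even_of_le {U : ℝ → ℝ} {L α a c t : ℝ} (hα : 0 < α)
    (heven : ∀ t, U (-t) = U t) (hmono : MonotoneOn U (Icc 0 L)) (ha : a ∈ Ioc 0 L)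
    (hgrowth : ∀ s, 0 < s → s ≤ a → U a * (s / a) ^ α ≤ U s)
    (hc : 0 < c) (hca : c < U a) (ht : t ∈ Icc (-L) L) (hUt : U t ≤ c) :
    |t| ≤ a * (c / U a) ^ α⁻¹ := by
  have hUabs : U |t| = U t := by
    rcases abs_choice t with h | h <;> rw [h]
    exact heven t
  exact le_mul_rpow_of_le_of_lt hα hmono ha hgrowth hc hca
    ⟨abs_nonneg t, abs_le.2 ht⟩ (hUabs ▸ hUt)

theorem volume_le_of_subset_sublevel_of_even {U : ℝ → ℝ} {L α a c : ℝ} (hα : 0 < α)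
    (heven : ∀ t, U (-t) = U t) (hmono : MonotoneOn U (Icc 0 L)) (ha : a ∈ Ioc 0 L)
    (hgrowth : ∀ s, 0 < s → s ≤ a → U a * (s / a) ^ α ≤ U s)
    (hc : 0 < c) (hca : c < U a) {S : Set ℝ} (hS : S ⊆ {t | t ∈ Icc (-L) L ∧ U t ≤ c}) :
    (volume S).toReal ≤ 2 * (a * (c / U a) ^ α⁻¹) := by
  set b := a * (c / U a) ^ α⁻¹
  have hsub : S ⊆ Icc (-b) b := fun t ht =>
    abs_le.1 (abs_le_of_even_of_le hα heven hmono ha hgrowth hc hca (hS ht).1 (hS ht).2)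
  have hb : 0 ≤ b := by have := hc.trans hca; have := ha.1; positivity
  calc (volume S).toReal ≤ (volume (Icc (-b) b)).toReal :=
        ENNReal.toReal_mono measure_Icc_lt_top.ne (measure_mono hsub)
    _ = 2 * b := by rw [Real.volume_Icc, ENNReal.toReal_ofReal (by linarith)]; ring

theorem mul_rpow_inv_le {δ a u ε q C K : ℝ} (hδ₀ : 0 ≤ δ) (hδ₁ : δ < 1) (ha : 0 < a)
    (hu : 0 < u) (hε : 0 < ε) (haC : a ^ (1 - δ) ≤ C * u) (hεq : 2 * ε ≤ q * u)
    (hqC : 2 * C * q ^ (δ / (1 - δ)) ≤ K) :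
    a * (2 * ε / u) ^ (1 - δ)⁻¹ ≤ a ^ δ * ε * K := by
  have hα : 0 < 1 - δ := by linarith
  have hx : 0 < 2 * ε / u := by positivity
  have hxq : 2 * ε / u ≤ q := (div_le_iff₀ hu).2 hεq
  have hC : 0 ≤ C := nonneg_of_mul_nonneg_left
    ((Real.rpow_pos_of_pos ha _).le.trans haC) hu
  have hsplit_a : a = a ^ δ * a ^ (1 - δ) := by
    rw [← Real.rpow_add ha, add_sub_cancel, Real.rpow_one]
  have hsplit_x : (2 * ε / u) ^ (1 - δ)⁻¹ = 2 * ε / u * (2 * ε / u) ^ (δ / (1 - δ)) := by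
    rw [← Real.rpow_one_add' hx.le (by positivity)]
    congr 1
    field_simp
    ring
  calc a * (2 * ε / u) ^ (1 - δ)⁻¹
      = a ^ δ * (a ^ (1 - δ) * (2 * ε / u) * (2 * ε / u) ^ (δ / (1 - δ))) := by
        rw [hsplit_x]; nth_rewrite 1 [hsplit_a]; ring
    _ ≤ a ^ δ * (C * u * (2 * ε / u) * q ^ (δ / (1 - δ))) := by
        gcongr
    _ = a ^ δ * ε * (2 * C * q ^ (δ / (1 - δ))) := by
        field_simp
    _ ≤ a ^ δ * ε * K := by gcongr

theorem le_two_mul_of_one_sub_le_exp_neg {u ε : ℝ} (hε₀ : 0 ≤ ε) (hε : ε ≤ 1 / 2)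
    (h : 1 - ε ≤ Real.exp (-u)) : u ≤ 2 * ε := by
  have hexp : Real.exp u * (1 - ε) ≤ 1 := by
    calc Real.exp u * (1 - ε) ≤ Real.exp u * Real.exp (-u) := by gcongr
      _ = 1 := by rw [← Real.exp_add, add_neg_cancel, Real.exp_zero]
  nlinarith [Real.add_one_le_exp u, Real.exp_pos u]

theorem norm_exp_neg_ofReal_sub_I_mul (u v : ℝ) :
    ‖Complex.exp (-(u : ℂ) - Complex.I * (v : ℂ))‖ = Real.exp (-u) := by
  rw [Complex.norm_exp]
  simp

theorem le_norm_of_mem_carlesonSquare {r₀ t₀ : ℝ} {z : ℂ} (hr₀ : 0 ≤ r₀)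
    (hz : z ∈ carlesonSquare r₀ t₀) : r₀ ≤ ‖z‖ := by
  obtain ⟨ρ, s, hρ, -, -, rfl⟩ := hz
  rw [norm_mul, Complex.norm_exp_ofReal_mul_I, mul_one, Complex.norm_real, Real.norm_eq_abs,
    abs_of_nonneg (hr₀.trans hρ)]
  exact hρ

theorem volume_preimage_carlesonSquare_le {δ : ℝ} (hδ₀ : 0 ≤ δ) (hδ₁ : δ < 1)
    {U V : ℝ → ℝ} (hU : ClassU U)
    (hgrowth : ∀ {s t : ℝ}, 0 < s → s ≤ t → t ≤ Real.pi / 2 →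
      U t * (s / t) ^ (1 - δ) ≤ U s)
    {φ : ℝ → ℂ} (hφ : ∀ t, φ t = Complex.exp (-(U t : ℂ) - Complex.I * (V t : ℂ)))
    {a q ε r t₀ : ℝ} (ha : a ∈ Ioc 0 1) (hq : q < 1)
    (hqC : 2 * ((Real.pi / 2) ^ (1 - δ) / U (Real.pi / 2)) * q ^ (δ / (1 - δ)) ≤ Real.pi)
    (hε₀ : 0 < ε) (hε : ε ≤ 1 / 2) (hεq : 2 * ε ≤ q * U a) :
    (volume {t : ℝ | t ∈ Icc (-Real.pi) Real.pi ∧ r < ‖φ t‖ ∧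
        φ t ∈ carlesonSquare (1 - ε) t₀}).toReal ≤ a ^ δ * ε * Real.pi * 2 := by
  obtain ⟨-, heven, -, -, hmono, hpos, -⟩ := hU
  have hπ : 1 < Real.pi / 2 := by linarith [Real.pi_gt_three]
  have hUa : 0 < U a := hpos a ha.1 (by linarith [ha.2])
  have hsub : {t : ℝ | t ∈ Icc (-Real.pi) Real.pi ∧ r < ‖φ t‖ ∧
      φ t ∈ carlesonSquare (1 - ε) t₀} ⊆
      {t | t ∈ Icc (-Real.pi) Real.pi ∧ U t ≤ 2 * ε} :=
    fun t ⟨ht, _, hQ⟩ => ⟨ht, le_two_mul_of_one_sub_le_exp_neg hε₀.le hε <| by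
      simpa [hφ, norm_exp_neg_ofReal_sub_I_mul] using
        le_norm_of_mem_carlesonSquare (by linarith) hQ⟩
  have hvol := volume_le_of_subset_sublevel_of_even (by linarith) heven hmono
    ⟨ha.1, by linarith [ha.2]⟩ (fun s hs hsa => hgrowth hs hsa (by linarith [ha.2]))
    (by positivity) (hεq.trans_lt (mul_lt_of_lt_one_left hUa hq)) hsub
  have haC := rpow_le_div_mul_of_mul_rpow_div_le ha.1.le (by linarith)
    (hpos _ (by linarith) (by linarith)) (hgrowth ha.1 (by linarith [ha.2]) le_rfl)
  linarith [mul_rpow_inv_le hδ₀ hδ₁ ha.1 hUa hε₀ haC hεq hqC]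

theorem eventually_two_mul_exp_neg_lt_one_and_mul_rpow_le {ι : Type*} {l : Filter ι}
    {w : ι → ℝ} (hw : Tendsto w l atTop) {k e K : ℝ} (hk : 0 < k) (he : 0 < e) (hK : 0 < K)
    (C : ℝ) :
    ∀ᶠ i in l, 2 * Real.exp (-(k * w i)) < 1 ∧ C * (2 * Real.exp (-(k * w i))) ^ e ≤ K := by
  have hq : Tendsto (fun i => 2 * Real.exp (-(k * w i))) l (𝓝 0) := by
    simpa using (Real.tendsto_exp_atBot.comp
      (tendsto_neg_atTop_atBot.comp (hw.const_mul_atTop hk))).const_mul 2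
  have hqC : Tendsto (fun i => C * (2 * Real.exp (-(k * w i))) ^ e) l (𝓝 0) := by
    simpa using (hq.rpow_const_nhds_zero he).const_mul C
  exact (hq.eventually (gt_mem_nhds one_pos)).and (hqC.eventually (ge_mem_nhds hK))

theorem exp_neg_eq_of_etaU_eq {U : ℝ → ℝ} {x y : ℝ} (hpos : 0 < U (Real.exp (-x)))
    (h : etaU U x = y) : U (Real.exp (-x)) = Real.exp (-y) := by
  rw [← h, etaU, neg_neg, Real.exp_log hpos]

theorem stmt17_general (δ : ℝ) (hδ₀ : 0 < δ) (hδ₁ : δ < 1)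
    (U U' : ℝ → ℝ) (hU_mem : ClassU U)
    (hderiv : ∀ t ∈ Set.Ioc (0 : ℝ) (Real.pi / 2), HasDerivAt U (U' t) t)
    (hbound : ∀ t ∈ Set.Ioc (0 : ℝ) (Real.pi / 2), t * U' t ≤ (1 - δ) * U t)
    (ω : ℝ → ℝ) (hω_top : Tendsto ω atTop atTop)
    (x₂ : ℝ) (hωeq : ∀ x : ℝ, x₂ ≤ x → etaU U (x / ω x) = ω x)
    (τ : ℝ) (hτ : 1 < τ)
    (V : ℝ → ℝ)
    (φ : ℝ → ℂ) (hφ : ∀ t, φ t = Complex.exp (-(U t : ℂ) - Complex.I * (V t : ℂ))) :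
    ∃ N : ℕ, ∀ n : ℕ, N ≤ n →
      ∀ ε : ℝ, 0 < ε → ε ≤ Real.exp (-τ * ω n) →
        ∀ r : ℝ, 0 < r → r < 1 → ∀ t₀ : ℝ,
          (volume {t : ℝ | t ∈ Set.Icc (-Real.pi) Real.pi ∧ r < ‖φ t‖ ∧
              φ t ∈ carlesonSquare (1 - ε) t₀}).toReal / (2 * Real.pi)
            ≤ Real.exp (-δ * n / ω n) * ε := by
  have hpos := hU_mem.2.2.2.2.2.1
  have hgrowth {s t : ℝ} (hs : 0 < s) (hst : s ≤ t) (ht : t ≤ Real.pi / 2) :=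
    mul_rpow_div_le_of_mul_deriv_le
      (fun x hx => hpos x hx.1 (by linarith [hx.2, Real.pi_pos])) hderiv hbound hs hst ht
  have hωn : Tendsto (fun n : ℕ => ω n) atTop atTop := hω_top.comp tendsto_natCast_atTop_atTop
  obtain ⟨N, hN⟩ := eventually_atTop.1 <|
    (tendsto_natCast_atTop_atTop.eventually_ge_atTop x₂).and <|
      (hωn.eventually_gt_atTop 0).and <|
      eventually_two_mul_exp_neg_lt_one_and_mul_rpow_le hωn (k := τ - 1) (e := δ / (1 - δ))
        (by linarith) (by bound) Real.pi_pos (2 * ((Real.pi / 2) ^ (1 - δ) / U (Real.pi / 2)))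
  refine ⟨N, fun n hn ε hε₀ hε r _ _ t₀ => ?_⟩
  obtain ⟨hx₂, hw, hq, hqC⟩ := hN n hn
  set a := Real.exp (-(n / ω n))
  have ha : a ∈ Ioc 0 1 :=
    ⟨Real.exp_pos _, Real.exp_le_one_iff.2 (neg_nonpos.2 (by positivity))⟩
  have hUa : U a = Real.exp (-ω n) :=
    exp_neg_eq_of_etaU_eq (hpos a ha.1 (by linarith [ha.2, Real.pi_gt_three])) (hωeq n hx₂)
  have hεq : 2 * ε ≤ 2 * Real.exp (-((τ - 1) * ω n)) * U a := by
    rw [hUa, mul_assoc, ← Real.exp_add, show -((τ - 1) * ω n) + -ω n = -τ * ω n by ring]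
    linarith
  have hε2 : ε ≤ 1 / 2 := by
    nlinarith [Real.exp_lt_one_iff.2 (neg_lt_zero.2 hw), Real.exp_pos (-ω n)]
  have hvol := volume_preimage_carlesonSquare_le hδ₀.le hδ₁ hU_mem hgrowth hφ (r := r)
    (t₀ := t₀) ha hq hqC hε₀ hε2 hεq
  rw [div_le_iff₀ (by positivity), show -δ * n / ω n = -(n / ω n) * δ by ring, Real.exp_mul]
  linarith

theorem stmt17 (δ : ℝ) (hδ₀ : 0 < δ) (hδ₁ : δ < 1)
    (U U' : ℝ → ℝ) (hU_mem : ClassU U)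
    (hderiv : ∀ t ∈ Set.Ioc (0 : ℝ) (Real.pi / 2), HasDerivAt U (U' t) t)
    (hbound : ∀ t ∈ Set.Ioc (0 : ℝ) (Real.pi / 2), t * U' t ≤ (1 - δ) * U t)
    (ω : ℝ → ℝ) (hω_mono : Monotone ω) (hω_top : Tendsto ω atTop atTop)
    (x₂ : ℝ) (hωeq : ∀ x : ℝ, x₂ ≤ x → etaU U (x / ω x) = ω x)
    (τ : ℝ) (hτ : 1 < τ)
    (V : ℝ → ℝ) (hV : Measurable V)
    (φ : ℝ → ℂ) (hφ : ∀ t, φ t = Complex.exp (-(U t : ℂ) - Complex.I * (V t : ℂ))) :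
    ∃ N : ℕ, ∀ n : ℕ, N ≤ n →
      ∀ ε : ℝ, 0 < ε → ε ≤ Real.exp (-τ * ω n) →
        ∀ r : ℝ, 0 < r → r < 1 → ∀ t₀ : ℝ,
          (volume {t : ℝ | t ∈ Set.Icc (-Real.pi) Real.pi ∧ r < ‖φ t‖ ∧
              φ t ∈ carlesonSquare (1 - ε) t₀}).toReal / (2 * Real.pi)
            ≤ Real.exp (-δ * n / ω n) * ε :=
  stmt17_general δ hδ₀ hδ₁ U U' hU_mem hderiv hbound ω hω_top x₂ hωeq τ hτ V φ hφ

end
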